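/- arXiv:2301.05049 — 5 statements merged into one kernel-verified Lean document; each statement's English description precedes it below -/
import Mathlib

section
/- Let a, b, c, d be four points on an x-monotone polygonal terrain T with x(a) < x(b) < x(c) < x(d). If a sees c and b sees d (where two points see each other iff the segment between them contains no point strictly below T), then a sees d. -/
/-!
Let `s(u, v)` be the slope of the terrain between the abscissae `u < v`.  A point `x ∈ (u, v)` lies
below the chord `[u, v]` iff `s(u, x) ≤ s(u, v)`, and since `s(u, v)` is a convex combination of
`s(u, x)` and `s(x, v)`, equivalently `s(u, v) ≤ s(x, v)`, or `s(u, x) ≤ s(x, v)`.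

Since `a` sees `c` and `b` sees `d`, the points `b` and `c` lie below the chords `[a, c]` and
`[b, d]`, which gives `s(a, b) ≤ s(a, c) ≤ s(b, c) ≤ s(b, d) ≤ s(c, d)`.  Hence `b` and `c` both
lie below the chord `[a, d]`, i.e. `s(a, c) ≤ s(a, d) ≤ s(b, d)`.  A point `x ≤ c` lies below
`[a, c]`, hence below `[a, d]`; a point `x > c` lies below `[b, d]`, hence below `[a, d]`.
-/

/-- Euclidean distance between two points of `ℝ × ℝ`. -/
noncomputable def edist2 (p q : ℝ × ℝ) : ℝ :=
  Real.sqrt ((p.1 - q.1) ^ 2 + (p.2 - q.2) ^ 2)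

/-- `p` sees `q` over the terrain given by `f`: every point of the segment
`[p, q]` lies weakly above the graph of `f`. -/
def sees (f : ℝ → ℝ) (p q : ℝ × ℝ) : Prop :=
  ∀ t : ℝ, t ∈ Set.Icc (0 : ℝ) 1 →
    (1 - t) * p.2 + t * q.2 ≥ f ((1 - t) * p.1 + t * q.1)

open AffineMap Set

section ThreeSlopes

variable {k E : Type*} [Field k] [LinearOrder k] [IsStrictOrderedRing k]
  [AddCommGroup E] [PartialOrder E] [IsOrderedAddMonoid E] [Module k E]
  [IsStrictOrderedModule k E] [PosSMulReflectLE k E] {f : k → E} {a b c : k}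

theorem slope_le_slope_iff_adjacent_left (hab : a < b) (hbc : b < c) :
    slope f a b ≤ slope f a c ↔ slope f a b ≤ slope f b c := by
  rw [← lineMap_slope_slope_sub_div_sub f a b c (hab.trans hbc).ne]
  exact left_le_lineMap_iff_le (div_pos (sub_pos.2 hbc) (sub_pos.2 (hab.trans hbc)))

theorem slope_le_slope_iff_adjacent_right (hab : a < b) (hbc : b < c) :
    slope f a c ≤ slope f b c ↔ slope f a b ≤ slope f b c := by
  rw [← lineMap_slope_slope_sub_div_sub f a b c (hab.trans hbc).ne]
  refine lineMap_le_right_iff_le ((div_lt_one (sub_pos.2 (hab.trans hbc))).2 ?_)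
  linarith

theorem slope_le_slope_iff_adjacent (hab : a < b) (hbc : b < c) :
    slope f a b ≤ slope f a c ↔ slope f a c ≤ slope f b c :=
  (slope_le_slope_iff_adjacent_left hab hbc).trans (slope_le_slope_iff_adjacent_right hab hbc).symm

end ThreeSlopes

theorem sees_graph_iff_forall_slope_le {f : ℝ → ℝ} {u v : ℝ} (huv : u < v) :
    sees f (u, f u) (v, f v) ↔ ∀ x ∈ Ioo u v, slope f u x ≤ slope f u v := by
  have hsees : sees f (u, f u) (v, f v) ↔
      ∀ r ∈ Icc (0 : ℝ) 1, f (lineMap u v r) ≤ lineMap (f u) (f v) r := by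
    simp only [sees, lineMap_apply_ring, ge_iff_le]
  rw [hsees]
  constructor
  · rintro h x ⟨hux, hxv⟩
    have hvu : v - u ≠ 0 := sub_ne_zero.2 huv.ne'
    have hr : (x - u) / (v - u) * (v - u) = x - u := div_mul_cancel₀ _ hvu
    have hx : lineMap u v ((x - u) / (v - u)) = x := by
      rw [lineMap_apply_ring', hr, sub_add_cancel]
    rw [← hx, ← map_le_lineMap_iff_slope_le_slope_left (by rw [hr]; linarith)]
    refine h _ ⟨div_nonneg ?_ ?_, (div_le_one (sub_pos.2 huv)).2 ?_⟩ <;> linarith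
  · rintro h r ⟨hr0, hr1⟩
    rcases hr0.eq_or_lt with rfl | hr0
    · simp
    rcases hr1.eq_or_lt with rfl | hr1
    · simp
    rw [map_le_lineMap_iff_slope_le_slope_left (mul_pos hr0 (sub_pos.2 huv))]
    exact h _ ⟨(left_lt_lineMap_iff_pos huv).2 hr0, (lineMap_lt_right_iff_lt_one huv).2 hr1⟩

theorem order_claim_general (f : ℝ → ℝ)
    (xa xb xc xd : ℝ) (hab : xa < xb) (hbc : xb < xc) (hcd : xc < xd)
    (hac : sees f (xa, f xa) (xc, f xc))
    (hbd : sees f (xb, f xb) (xd, f xd)) :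
    sees f (xa, f xa) (xd, f xd) := by
  have hbd_lt : xb < xd := hbc.trans hcd
  rw [sees_graph_iff_forall_slope_le (hab.trans hbc)] at hac
  rw [sees_graph_iff_forall_slope_le hbd_lt] at hbd
  rw [sees_graph_iff_forall_slope_le (hab.trans hbd_lt)]
  have hb_below_ac : slope f xa xb ≤ slope f xb xc :=
    (slope_le_slope_iff_adjacent_left hab hbc).1 (hac xb ⟨hab, hbc⟩)
  have hc_below_bd : slope f xb xc ≤ slope f xc xd :=
    (slope_le_slope_iff_adjacent_left hbc hcd).1 (hbd xc ⟨hbc, hcd⟩)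
  have hc_below_ad : slope f xa xc ≤ slope f xa xd :=
    (slope_le_slope_iff_adjacent_left (hab.trans hbc) hcd).2
      (((slope_le_slope_iff_adjacent_right hab hbc).2 hb_below_ac).trans hc_below_bd)
  have hb_below_ad : slope f xa xd ≤ slope f xb xd :=
    (slope_le_slope_iff_adjacent_right hab hbd_lt).2 (hb_below_ac.trans (hbd xc ⟨hbc, hcd⟩))
  rintro x ⟨hax, hxd⟩
  rcases le_or_gt x xc with hxc | hcx
  · refine le_trans ?_ hc_below_ad
    rcases hxc.eq_or_lt with rfl | hxc
    · exact le_rfl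
    · exact hac x ⟨hax, hxc⟩
  · have hbx : xb < x := hbc.trans hcx
    have hx_below_bd : slope f xb xd ≤ slope f x xd :=
      (slope_le_slope_iff_adjacent hbx hxd).1 (hbd x ⟨hbx, hxd⟩)
    exact (slope_le_slope_iff_adjacent hax hxd).2 (hb_below_ad.trans hx_below_bd)

/-- The order claim for 1.5D terrains. -/
theorem order_claim (f : ℝ → ℝ) (hf : Continuous f)
    (xa xb xc xd : ℝ) (hab : xa < xb) (hbc : xb < xc) (hcd : xc < xd)
    (hac : sees f (xa, f xa) (xc, f xc))
    (hbd : sees f (xb, f xb) (xd, f xd)) :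
    sees f (xa, f xa) (xd, f xd) :=
  order_claim_general f xa xb xc xd hab hbc hcd hac hbd
end

section
/- Let T be a 1.5D terrain given by a continuous function f : ℝ → ℝ, and let p_i, p_j be points on T with y(p_i) < y(p_j). Let q be a point on T with x(q) < x(p_i) lying on the perpendicular bisector of p_i and p_j. Then any point r on T with x(r) < x(q) that is visible from p_i is strictly closer to p_j than to p_i. -/
def sqDist (p q : ℝ × ℝ) : ℝ := (p.1 - q.1) ^ 2 + (p.2 - q.2) ^ 2

lemma sqDist_nonneg (p q : ℝ × ℝ) : 0 ≤ sqDist p q := by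
  unfold sqDist; positivity

lemma edist2_eq_edist2_iff {p a b : ℝ × ℝ} :
    edist2 p a = edist2 p b ↔ sqDist p a = sqDist p b :=
  Real.sqrt_inj (sqDist_nonneg p a) (sqDist_nonneg p b)

lemma edist2_lt_edist2_iff {p a b : ℝ × ℝ} :
    edist2 p a < edist2 p b ↔ sqDist p a < sqDist p b :=
  Real.sqrt_lt_sqrt_iff (sqDist_nonneg p a)

def bisectorGap (a b p : ℝ × ℝ) : ℝ := sqDist p a - sqDist p b

section bisectorGap

variable (a b : ℝ × ℝ)

lemma bisectorGap_left : bisectorGap a b a = -sqDist a b := by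
  unfold bisectorGap sqDist; ring

lemma bisectorGap_convexComb (u v : ℝ × ℝ) (t : ℝ) :
    bisectorGap a b ((1 - t) * u.1 + t * v.1, (1 - t) * u.2 + t * v.2) =
      (1 - t) * bisectorGap a b u + t * bisectorGap a b v := by
  unfold bisectorGap sqDist; ring

lemma bisectorGap_add_snd (p : ℝ × ℝ) (h : ℝ) :
    bisectorGap a b (p.1, p.2 + h) = bisectorGap a b p + 2 * h * (b.2 - a.2) := by
  unfold bisectorGap sqDist; ring

end bisectorGap

lemma sqDist_lt_of_segment_above_bisector {a b q r : ℝ × ℝ} {t : ℝ}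
    (hab : a.2 < b.2) (hq : sqDist q a = sqDist q b) (ht₀ : 0 ≤ t) (ht₁ : t < 1)
    (hx : (1 - t) * a.1 + t * r.1 = q.1) (hy : q.2 ≤ (1 - t) * a.2 + t * r.2) :
    sqDist r b < sqDist r a := by
  set h := (1 - t) * a.2 + t * r.2 - q.2
  have hs : bisectorGap a b (q.1, q.2 + h) = 2 * h * (b.2 - a.2) := by
    rw [bisectorGap_add_snd, bisectorGap, hq, sub_self, zero_add]
  have hs' : bisectorGap a b (q.1, q.2 + h) =
      (1 - t) * -sqDist a b + t * bisectorGap a b r := by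
    rw [← bisectorGap_left, ← bisectorGap_convexComb, hx]
    congr 2; ring
  have hab' : 0 < sqDist a b := by
    unfold sqDist; nlinarith [sq_nonneg (a.1 - b.1)]
  have hgap : 0 < t * bisectorGap a b r := by
    nlinarith [mul_nonneg (sub_nonneg.2 hy) (sub_nonneg.2 hab.le)]
  have hr := pos_of_mul_pos_right hgap ht₀
  unfold bisectorGap at hr
  linarith

theorem key_lemma_left_general (f : ℝ → ℝ)
    (xi xj xq xr : ℝ)
    (hy : f xi < f xj)
    (hq_left : xq < xi)
    (hq_bis : edist2 (xq, f xq) (xi, f xi) = edist2 (xq, f xq) (xj, f xj))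
    (hr_left : xr < xq)
    (hvis : sees f (xi, f xi) (xr, f xr)) :
    edist2 (xr, f xr) (xj, f xj) < edist2 (xr, f xr) (xi, f xi) := by
  have hden : 0 < xi - xr := by linarith
  set t := (xi - xq) / (xi - xr)
  have ht₀ : 0 ≤ t := div_nonneg (by linarith) hden.le
  have ht₁ : t < 1 := (div_lt_one hden).2 (by linarith)
  have hx : (1 - t) * xi + t * xr = xq := by
    simp only [t]; field_simp; ring
  have hseen := hvis t ⟨ht₀, ht₁.le⟩
  rw [hx] at hseen
  exact edist2_lt_edist2_iff.2 <| sqDist_lt_of_segment_above_bisector (q := (xq, f xq)) hy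
    (edist2_eq_edist2_iff.1 hq_bis) ht₀ ht₁ hx hseen

/-- Key lemma, left-side case. -/
theorem key_lemma_left (f : ℝ → ℝ) (hf : Continuous f)
    (xi xj xq xr : ℝ)
    (hy : f xi < f xj)
    (hq_left : xq < xi)
    (hq_bis : edist2 (xq, f xq) (xi, f xi) = edist2 (xq, f xq) (xj, f xj))
    (hr_left : xr < xq)
    (hvis : sees f (xi, f xi) (xr, f xr)) :
    edist2 (xr, f xr) (xj, f xj) < edist2 (xr, f xr) (xi, f xi) :=
  key_lemma_left_general f xi xj xq xr hy hq_left hq_bis hr_left hvis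
end

section
/- Let T be a 1.5D terrain given by a continuous function f : ℝ → ℝ, and let p_i, p_j be points on T with y(p_i) < y(p_j). Let q be a point on T with x(q) > x(p_i) lying on the perpendicular bisector of p_i and p_j. Then any point r on T with x(r) > x(q) that is visible from p_i is strictly closer to p_j than to p_i. -/
/-!
Put `a = q - pᵢ`, `b = r - pᵢ`, `d = pⱼ - pᵢ`. Equidistance of `q` from `pᵢ` and `pⱼ` says
`2 ⟪a, d⟫ = ‖d‖² > 0`, and `r` is closer to `pⱼ` exactly when `2 ⟪b, d⟫ > ‖d‖²`. Since `r` is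
visible from `pᵢ` and `q` lies between them, `q` is on or below the chord `pᵢ r`; as `d` points
upwards this gives `a₁ ⟪b, d⟫ ≥ b₁ ⟪a, d⟫`, and `b₁ > a₁ > 0` yields `⟪b, d⟫ > ⟪a, d⟫`.
-/

theorem edist2_eq_edist2_iff_s2 (p q r : ℝ × ℝ) :
    edist2 p q = edist2 p r ↔
      (p.1 - q.1) ^ 2 + (p.2 - q.2) ^ 2 = (p.1 - r.1) ^ 2 + (p.2 - r.2) ^ 2 :=
  Real.sqrt_inj (by positivity) (by positivity)

theorem edist2_lt_edist2_iff_s2 (p q r : ℝ × ℝ) :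
    edist2 p q < edist2 p r ↔
      (p.1 - q.1) ^ 2 + (p.2 - q.2) ^ 2 < (p.1 - r.1) ^ 2 + (p.2 - r.2) ^ 2 :=
  Real.sqrt_lt_sqrt_iff (by positivity)

theorem sees.le_chord {f : ℝ → ℝ} {p r : ℝ × ℝ} (h : sees f p r) (hpr : p.1 < r.1) {x : ℝ}
    (hx : x ∈ Set.Icc p.1 r.1) :
    (f x - p.2) * (r.1 - p.1) ≤ (x - p.1) * (r.2 - p.2) := by
  have hw : 0 < r.1 - p.1 := sub_pos.2 hpr
  set t := (x - p.1) / (r.1 - p.1)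
  have ht_mul : t * (r.1 - p.1) = x - p.1 := div_mul_cancel₀ _ hw.ne'
  have ht_mem : t ∈ Set.Icc (0 : ℝ) 1 :=
    ⟨div_nonneg (by linarith [hx.1]) hw.le, (div_le_one hw).2 (by linarith [hx.2])⟩
  have hpoint : (1 - t) * p.1 + t * r.1 = x := by linear_combination ht_mul
  have hlow : f x - p.2 ≤ t * (r.2 - p.2) := by
    have := h t ht_mem
    rw [hpoint] at this
    linarith
  calc (f x - p.2) * (r.1 - p.1) ≤ t * (r.2 - p.2) * (r.1 - p.1) :=
        mul_le_mul_of_nonneg_right hlow hw.le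
    _ = (x - p.1) * (r.2 - p.2) := by rw [← ht_mul]; ring

theorem inner_lt_inner_of_le_chord {a₁ a₂ b₁ b₂ d₁ d₂ : ℝ} (ha : 0 < a₁) (hab : a₁ < b₁)
    (hd : 0 < d₂) (hchord : a₂ * b₁ ≤ a₁ * b₂) (hpos : 0 < a₁ * d₁ + a₂ * d₂) :
    a₁ * d₁ + a₂ * d₂ < b₁ * d₁ + b₂ * d₂ := by
  refine lt_of_mul_lt_mul_left ?_ ha.le
  calc a₁ * (a₁ * d₁ + a₂ * d₂) < b₁ * (a₁ * d₁ + a₂ * d₂) := mul_lt_mul_of_pos_right hab hpos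
    _ = a₁ * b₁ * d₁ + (a₂ * b₁) * d₂ := by ring
    _ ≤ a₁ * b₁ * d₁ + (a₁ * b₂) * d₂ := by gcongr
    _ = a₁ * (b₁ * d₁ + b₂ * d₂) := by ring

theorem key_lemma_right_general (f : ℝ → ℝ)
    (xi xj xq xr : ℝ)
    (hy : f xi < f xj)
    (hq_right : xq > xi)
    (hq_bis : edist2 (xq, f xq) (xi, f xi) = edist2 (xq, f xq) (xj, f xj))
    (hr_right : xr > xq)
    (hvis : sees f (xi, f xi) (xr, f xr)) :
    edist2 (xr, f xr) (xj, f xj) < edist2 (xr, f xr) (xi, f xi) := by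
  have hchord : (f xq - f xi) * (xr - xi) ≤ (xq - xi) * (f xr - f xi) :=
    hvis.le_chord (hq_right.trans hr_right) ⟨hq_right.le, hr_right.le⟩
  have hbis : (xq - xi) ^ 2 + (f xq - f xi) ^ 2 = (xq - xj) ^ 2 + (f xq - f xj) ^ 2 :=
    (edist2_eq_edist2_iff_s2 _ _ _).1 hq_bis
  have hpos : 0 < (xq - xi) * (xj - xi) + (f xq - f xi) * (f xj - f xi) := by
    nlinarith [sq_nonneg (xj - xi)]
  have hinner := inner_lt_inner_of_le_chord (b₁ := xr - xi) (sub_pos.2 hq_right)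
    (by linarith) (sub_pos.2 hy) hchord hpos
  rw [edist2_lt_edist2_iff_s2]
  linear_combination 2 * hinner - hbis

/-- Key lemma, right-side case. -/
theorem key_lemma_right (f : ℝ → ℝ) (hf : Continuous f)
    (xi xj xq xr : ℝ)
    (hy : f xi < f xj)
    (hq_right : xq > xi)
    (hq_bis : edist2 (xq, f xq) (xi, f xi) = edist2 (xq, f xq) (xj, f xj))
    (hr_right : xr > xq)
    (hvis : sees f (xi, f xi) (xr, f xr)) :
    edist2 (xr, f xr) (xj, f xj) < edist2 (xr, f xr) (xi, f xi) :=
  key_lemma_right_general f xi xj xq xr hy hq_right hq_bis hr_right hvis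
end

section
/- Let P be a finite nonempty set of viewpoints on a 1.5D terrain T, each with viewshed W_p ⊆ T, and suppose each W_p is a closed subset of T. Define r* = max over p ∈ P of sup {dist(p, x) : x ∈ closure of V_p}, where V_p is the Voronoi viewshed of p (points of W_p at least as close to p as to any other viewpoint seeing them). If every viewpoint's visibility is restricted to range r (i.e., x is r-visible from p iff x ∈ W_p and dist(p,x) ≤ r), then the union of the r-restricted viewsheds equals the union of the unrestricted viewsheds if and only if r ≥ r*. -/
lemma edist2_nonneg (p q : ℝ × ℝ) : 0 ≤ edist2 p q := Real.sqrt_nonneg _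

lemma edist2_self (p : ℝ × ℝ) : edist2 p p = 0 := by simp [edist2]

lemma edist2_cont (p : ℝ × ℝ) : Continuous (edist2 p) := by
  unfold edist2
  exact Real.continuous_sqrt.comp (by continuity)

/-- Characterization of the minimum visibility range `r*` preserving the
visibility map. -/
theorem range_restricted_iff (f : ℝ → ℝ) (hf : Continuous f)
    (P : Set (ℝ × ℝ)) (hPfin : P.Finite) (hPne : P.Nonempty)
    (hPT : ∀ p ∈ P, p.2 = f p.1)
    (W V : (ℝ × ℝ) → Set (ℝ × ℝ))
    (hW : ∀ p, W p = {x | x.2 = f x.1 ∧ sees f p x})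
    (hV : ∀ p, V p = {x ∈ W p |
      ∀ q ∈ P, x ∈ W q → edist2 p x ≤ edist2 q x})
    (hclosed : ∀ p ∈ P, IsClosed (W p))
    (hbdd : ∀ p ∈ P, Bornology.IsBounded (W p))
    (rstar : ℝ)
    (hrstar : rstar =
      sSup ((fun p => sSup ((fun x => edist2 p x) '' closure (V p))) '' P))
    (r : ℝ) :
    (⋃ p ∈ P, {x ∈ W p | edist2 p x ≤ r}) = (⋃ p ∈ P, W p) ↔ rstar ≤ r := by
  have hVW : ∀ p, V p ⊆ W p := by
    intro p; rw [hV p]; exact fun x hx => hx.1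
  have hpW : ∀ p ∈ P, p ∈ W p := by
    intro p hp
    rw [hW p]
    refine ⟨hPT p hp, ?_⟩
    intro t ht
    have h1 : (1 - t) * p.1 + t * p.1 = p.1 := by ring
    have h2 : (1 - t) * p.2 + t * p.2 = p.2 := by ring
    rw [h1, h2, ← hPT p hp]
  have hpV : ∀ p ∈ P, p ∈ V p := by
    intro p hp
    rw [hV p]
    exact ⟨hpW p hp, fun q hq _ => by
      rw [edist2_self]; exact edist2_nonneg q p⟩
  have hcomp : ∀ p ∈ P, IsCompact (closure (V p)) := by
    intro p hp
    exact Metric.isCompact_of_isClosed_isBounded isClosed_closure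
      ((hbdd p hp).subset (hVW p)).closure
  have hbdA : ∀ p ∈ P, BddAbove ((fun x => edist2 p x) '' closure (V p)) := by
    intro p hp
    exact ((hcomp p hp).image (edist2_cont p)).bddAbove
  have houter : BddAbove
      ((fun p => sSup ((fun x => edist2 p x) '' closure (V p))) '' P) :=
    (hPfin.image _).bddAbove
  constructor
  · intro heq
    rw [hrstar]
    apply csSup_le (hPne.image _)
    rintro b ⟨p, hp, rfl⟩
    refine csSup_le ⟨edist2 p p, ⟨p, subset_closure (hpV p hp), rfl⟩⟩ ?_
    rintro b ⟨x, hx, rfl⟩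
    have hsub : V p ⊆ {y | edist2 p y ≤ r} := by
      intro y hy
      have hyW : y ∈ W p := hVW p hy
      have hyU : y ∈ ⋃ q ∈ P, {z ∈ W q | edist2 q z ≤ r} := by
        rw [heq]; exact Set.mem_biUnion hp hyW
      simp only [Set.mem_iUnion, Set.mem_setOf_eq] at hyU
      obtain ⟨q, hq, hyq, hle⟩ := hyU
      have hy' := hy
      rw [hV p] at hy'
      exact le_trans (hy'.2 q hq hyq) hle
    have hcl : closure (V p) ⊆ {y | edist2 p y ≤ r} :=
      closure_minimal hsub (isClosed_le (edist2_cont p) continuous_const)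
    exact hcl hx
  · intro hr
    apply Set.Subset.antisymm
    · exact Set.iUnion₂_mono fun p hp => Set.sep_subset _ _
    · intro x hx
      simp only [Set.mem_iUnion] at hx
      obtain ⟨p, hp, hxW⟩ := hx
      obtain ⟨q, hqmem, hmin⟩ := Set.exists_min_image {q ∈ P | x ∈ W q}
        (fun q => edist2 q x) (hPfin.sep _) ⟨p, hp, hxW⟩
      obtain ⟨hq, hxq⟩ := hqmem
      have hxV : x ∈ V q := by
        rw [hV q]
        exact ⟨hxq, fun q' hq' hxq' => hmin q' ⟨hq', hxq'⟩⟩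
      have h1 : edist2 q x ≤ sSup ((fun y => edist2 q y) '' closure (V q)) :=
        le_csSup (hbdA q hq) ⟨x, subset_closure hxV, rfl⟩
      have h2 : sSup ((fun y => edist2 q y) '' closure (V q)) ≤ rstar := by
        rw [hrstar]; exact le_csSup houter ⟨q, hq, rfl⟩
      exact Set.mem_biUnion hq ⟨hxq, le_trans h1 (le_trans h2 hr)⟩
end

section
/- Let f : ℝ → ℝ be continuous and let p_i = (x_i, f(x_i)), p_j = (x_j, f(x_j)) with f(x_i) < f(x_j). Let g : ℝ → ℝ be the affine function whose graph is the perpendicular bisector of p_i and p_j, and suppose there is x₀ < x_i with g(x₀) = f(x₀) (the bisector meets the terrain at x₀ to the left of p_i). Then for any x < x₀ with (x, f(x)) visible from p_i, we have f(x) > g(x). -/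
/-- If the bisector (graph of `g`) meets the terrain at `x₀` to the left of
`p_i`, then any terrain point further left visible from `p_i` lies strictly
above the bisector. -/
theorem visible_point_above_bisector (f : ℝ → ℝ) (hf : Continuous f)
    (xi xj : ℝ) (hy : f xi < f xj)
    (a b : ℝ)
    (hg : ∀ r : ℝ × ℝ,
      edist2 r (xi, f xi) = edist2 r (xj, f xj) ↔ r.2 = a * r.1 + b)
    (x₀ : ℝ) (hx₀ : x₀ < xi) (hmeet : a * x₀ + b = f x₀) :
    ∀ x : ℝ, x < x₀ → sees f (xi, f xi) (x, f x) → f x > a * x + b := by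
  set yi := f xi with hyi
  set yj := f xj with hyj
  have hyne : yj - yi > 0 := by linarith
  -- From hg: any point whose squared distances agree lies on the line.
  have key : ∀ X Y : ℝ, (X - xi) ^ 2 + (Y - yi) ^ 2 = (X - xj) ^ 2 + (Y - yj) ^ 2 →
      Y = a * X + b := by
    intro X Y h
    have := (hg (X, Y)).mp (by simp only [edist2]; rw [h])
    simpa using this
  -- Linear identity for the bisector.
  have hlin : ∀ X : ℝ, 2 * (yj - yi) * (a * X + b)
      = (xj ^ 2 + yj ^ 2 - xi ^ 2 - yi ^ 2) - 2 * (xj - xi) * X := by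
    intro X
    set Y : ℝ := ((xj ^ 2 + yj ^ 2 - xi ^ 2 - yi ^ 2) - 2 * (xj - xi) * X)
        / (2 * (yj - yi)) with hY
    have hsq : (X - xi) ^ 2 + (Y - yi) ^ 2 = (X - xj) ^ 2 + (Y - yj) ^ 2 := by
      have h2 : 2 * (yj - yi) * Y = (xj ^ 2 + yj ^ 2 - xi ^ 2 - yi ^ 2)
          - 2 * (xj - xi) * X := by
        rw [hY]; field_simp
      nlinarith [h2]
    have := key X Y hsq
    rw [← this, hY]; field_simp
  -- p_i lies strictly below the bisector.
  have hpi : yi < a * xi + b := by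
    have h1 := hlin xi
    nlinarith [sq_nonneg (xj - xi), sq_nonneg (yj - yi)]
  intro x hx hsee
  by_contra hcon
  push_neg at hcon
  have hden : xi - x > 0 := by linarith
  set t : ℝ := (xi - x₀) / (xi - x) with ht
  have ht0 : 0 ≤ t := div_nonneg (by linarith) hden.le
  have ht1 : t ≤ 1 := by
    rw [ht, div_le_one hden]; linarith
  have harg : (1 - t) * xi + t * x = x₀ := by
    rw [ht]; field_simp; ring
  have hv := hsee t ⟨ht0, ht1⟩
  simp only [harg] at hv
  -- affine combination on the line
  have hline : (1 - t) * (a * xi + b) + t * (a * x + b) = a * x₀ + b := by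
    rw [← harg]; ring
  have h1t : 0 < 1 - t := by
    rw [ht]; rw [sub_pos, div_lt_one hden]; linarith
  have : (1 - t) * yi + t * f x < a * x₀ + b := by
    rw [← hline]
    have h2 : t * f x ≤ t * (a * x + b) := mul_le_mul_of_nonneg_left hcon ht0
    have h3 : (1 - t) * yi < (1 - t) * (a * xi + b) :=
      mul_lt_mul_of_pos_left hpi h1t
    linarith
  rw [hmeet] at this
  exact absurd hv (by simpa using not_le.mpr this)
end
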